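/- For every t ∈ ℝ the limit Q(t) := lim_{k→∞} (1/k) log Σ_{σ∈Ω_k} ‖φ'_σ‖^t exists, and there exists a unique h ∈ ℝ such that Q(h) = 0; moreover this h satisfies 0 < h < ∞. -/

import Mathlib

open MeasureTheory Filter Metric

noncomputable section

/-- A cookie-cutter system on `J = [0,1]`. -/
structure CookieCutter where
  N : ℕ
  hN : 2 ≤ N
  Jsub : Fin N → Set ℝ
  f : ℝ → ℝ
  φ : Fin N → ℝ → ℝ
  c : ℝ
  γ : ℝ
  b : ℝ
  B : ℝ
  hJsub_sub : ∀ j, Jsub j ⊆ Set.Icc 0 1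
  hJsub_interval : ∀ j, ∃ u v : ℝ, u ≤ v ∧ Jsub j = Set.Icc u v
  hJsub_disj : ∀ i j, i ≠ j → Disjoint (Jsub i) (Jsub j)
  hbij : ∀ j, Set.BijOn f (Jsub j) (Set.Icc 0 1)
  hφ_maps : ∀ j, ∀ x ∈ Set.Icc (0:ℝ) 1, φ j x ∈ Jsub j
  hφ_rinv : ∀ j, ∀ x ∈ Set.Icc (0:ℝ) 1, f (φ j x) = x
  hφ_linv : ∀ j, ∀ x ∈ Jsub j, φ j (f x) = x
  hfdiff : ∀ j, ∀ x ∈ Jsub j, DifferentiableAt ℝ f x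
  hφdiff : ∀ j, ∀ x ∈ Set.Icc (0:ℝ) 1, DifferentiableAt ℝ (φ j) x
  hc : 0 < c
  hγ : γ ∈ Set.Ioc (0:ℝ) 1
  hHolder : ∀ j, ∀ x ∈ Jsub j, ∀ y ∈ Jsub j, |deriv f x - deriv f y| ≤ c * |x - y| ^ γ
  hb : IsGLB ((fun x => |deriv f x|) '' ⋃ j, Jsub j) b
  hB : IsLUB ((fun x => |deriv f x|) '' ⋃ j, Jsub j) B
  hb1 : 1 < b

namespace CookieCutter

variable (cc : CookieCutter)

/-- `φ_σ = φ_{σ_1} ∘ ⋯ ∘ φ_{σ_n}` for a word `σ`. -/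
def wordMap : List (Fin cc.N) → ℝ → ℝ
  | [] => id
  | j :: rest => cc.φ j ∘ wordMap rest

/-- The basic interval `J_σ = φ_σ(J)`. -/
def Jc (σ : List (Fin cc.N)) : Set ℝ := cc.wordMap σ '' Set.Icc 0 1

/-- The diameter `|J_σ|`. -/
def diamJ (σ : List (Fin cc.N)) : ℝ := Metric.diam (cc.Jc σ)

/-- `‖φ'_σ‖ = sup_{x ∈ J} |φ'_σ(x)|`. -/
def φnorm (σ : List (Fin cc.N)) : ℝ :=
  sSup ((fun x => |deriv (cc.wordMap σ) x|) '' Set.Icc 0 1)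

/-- The distortion constant `ξ = exp (c / (b^γ − 1))`. -/
def xi : ℝ := Real.exp (cc.c / (cc.b ^ cc.γ - 1))

/-- The cookie-cutter set `E = ⋂_{n ≥ 1} ⋃_{σ ∈ Ω_n} J_σ`. -/
def E : Set ℝ := ⋂ (n : ℕ) (_ : 1 ≤ n), ⋃ σ : Fin n → Fin cc.N, cc.Jc (List.ofFn σ)

/-- `η = ξ^{9h}`. -/
def eta (h : ℝ) : ℝ := cc.xi ^ ((9:ℝ) * h)

/-- `L = η³ ξ^{3h}`. -/
def Lconst (h : ℝ) : ℝ := (cc.eta h) ^ 3 * cc.xi ^ ((3:ℝ) * h)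

/-- A Gibbs-like measure for the cookie-cutter system: a Borel probability measure
supported on `E` with `η⁻¹|J_σ|^h ≤ μ(J_σ) ≤ η|J_σ|^h` for every word `σ`. -/
def IsGibbsLike (μ : Measure ℝ) (h : ℝ) : Prop :=
  IsProbabilityMeasure μ ∧ μ (cc.Eᶜ) = 0 ∧
    ∀ σ : List (Fin cc.N), σ ≠ [] →
      (cc.eta h)⁻¹ * cc.diamJ σ ^ h ≤ (μ (cc.Jc σ)).toReal ∧
      (μ (cc.Jc σ)).toReal ≤ cc.eta h * cc.diamJ σ ^ h

/-- A finite maximal antichain in `Ω`. -/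
def IsFMA (Γ : Finset (List (Fin cc.N))) : Prop :=
  (∀ σ ∈ Γ, σ ≠ []) ∧
  (∀ ω : ℕ → Fin cc.N, ∃ k : ℕ, 1 ≤ k ∧ (List.ofFn fun i : Fin k => ω i) ∈ Γ) ∧
  ∀ σ ∈ Γ, ∀ τ ∈ Γ, σ <+: τ → σ = τ

end CookieCutter

/-- The `n`-th quantization error of order `r`. -/
def Vnr (μ : Measure ℝ) (n : ℕ) (r : ℝ) : ℝ :=
  sInf ((fun α : Finset ℝ => ∫ x, Metric.infDist x (α : Set ℝ) ^ r ∂μ) ''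
    {α : Finset ℝ | α.Nonempty ∧ α.card ≤ n})

/-- The auxiliary quantization error `u_{n,r}` with `U = (0,1)`. -/
def unr (μ : Measure ℝ) (n : ℕ) (r : ℝ) : ℝ :=
  sInf ((fun α : Finset ℝ =>
      ∫ x, Metric.infDist x ((α : Set ℝ) ∪ (Set.Ioo (0:ℝ) 1)ᶜ) ^ r ∂μ) ''
    {α : Finset ℝ | α.card ≤ n})

/-! The inverse branches contract by at least `b⁻¹` and, by the Hölder continuity of `f'`, have
bounded distortion along words: `|φ'_σ(x)| ≤ ξ |φ'_σ(y)|` on `J`. Hence `‖φ'_{στ}‖` and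
`‖φ'_σ‖ ‖φ'_τ‖` agree up to the factor `ξ`, so `k ↦ log ∑_{σ ∈ Ω_k} ‖φ'_σ‖^t` is subadditive up
to the constant `|t| log ξ` and Fekete's lemma gives the limit `Q(t)`. Since
`B^{-k} ≤ ‖φ'_σ‖ ≤ b^{-k}` for `σ ∈ Ω_k`, the slopes of `Q` lie between `-log B` and
`-log b < 0`; so `Q` is continuous and strictly decreasing with `Q(0) = log N > 0`, and it has
exactly one zero, which is positive. -/

open Real Set Topology

theorem exists_tendsto_div_of_le_add_add {u : ℕ → ℝ} {a c : ℝ}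
    (hsub : ∀ m n, u (m + n) ≤ u m + u n + c) (hlow : ∀ n : ℕ, n * a ≤ u n) :
    ∃ L, Tendsto (fun n => u n / n) atTop (𝓝 L) := by
  have hv : Subadditive (fun n => u n + c) := fun m n => by linarith [hsub m n]
  have hbdd : BddBelow (range fun n : ℕ => (u n + c) / n) := by
    refine ⟨min 0 (a - |c|), ?_⟩
    rintro _ ⟨n, rfl⟩
    rcases Nat.eq_zero_or_pos n with rfl | hn
    · simp
    have hn' : (1 : ℝ) ≤ n := by exact_mod_cast hn
    rw [le_div_iff₀ (by positivity)]
    nlinarith [hlow n, neg_abs_le c, abs_nonneg c, min_le_right 0 (a - |c|),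
      min_le_left 0 (a - |c|)]
  refine ⟨hv.lim, ?_⟩
  have hc : Tendsto (fun n : ℕ => c / n) atTop (𝓝 0) := tendsto_const_div_atTop_nhds_zero_nat c
  simpa [add_div] using (hv.tendsto_lim hbdd).sub hc

theorem rpow_le_pow_abs_mul_rpow {x z K : ℝ} (hz : 0 < z) (hzx : z ≤ x) (hxz : x ≤ K * z)
    (t : ℝ) : z ^ t ≤ K ^ |t| * x ^ t := by
  have hK : 1 ≤ K := le_of_mul_le_mul_right (by linarith) hz
  have hx : 0 < x := hz.trans_le hzx
  rcases le_total 0 t with ht | ht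
  · calc z ^ t ≤ x ^ t := rpow_le_rpow hz.le hzx ht
      _ ≤ K ^ |t| * x ^ t := le_mul_of_one_le_left (by positivity) (one_le_rpow hK (abs_nonneg t))
  · calc z ^ t ≤ (x / K) ^ t :=
          rpow_le_rpow_of_nonpos (by positivity) (by rwa [div_le_iff₀' (by positivity)]) ht
      _ = K ^ |t| * x ^ t := by
          rw [div_rpow hx.le (by positivity), abs_of_nonpos ht, rpow_neg (by positivity),
            div_eq_inv_mul]

theorem le_exp_mul_of_sub_le_mul {x y ε : ℝ} (hy : 0 ≤ y) (h : x - y ≤ ε * y) :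
    x ≤ exp ε * y := by
  nlinarith [add_one_le_exp ε]

theorem deriv_mul_deriv_eq_one {f g : ℝ → ℝ} {s : Set ℝ} {x : ℝ} (hx : x ∈ s)
    (hs : UniqueDiffWithinAt ℝ s x) (hf : DifferentiableAt ℝ f (g x))
    (hg : DifferentiableAt ℝ g x) (hfg : ∀ y ∈ s, f (g y) = y) :
    deriv f (g x) * deriv g x = 1 := by
  refine hs.eq_deriv _ ?_ (hasDerivWithinAt_id x s)
  exact ((hf.hasDerivAt.comp x hg.hasDerivAt).hasDerivWithinAt).congr
    (fun y hy => (hfg y hy).symm) (hfg x hx).symm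

theorem existsUnique_zero_pos_of_slope_bounds {Q : ℝ → ℝ} {a A : ℝ} (ha : 0 < a)
    (hslope : ∀ t s, t ≤ s → (s - t) * a ≤ Q t - Q s ∧ Q t - Q s ≤ (s - t) * A)
    (h0 : 0 < Q 0) : (∃! h, Q h = 0) ∧ ∀ h, Q h = 0 → 0 < h := by
  have hanti : StrictAnti Q := fun t s hts => by
    nlinarith [(hslope t s hts.le).1]
  have hA : 0 ≤ A := by nlinarith [hslope 0 1 zero_le_one]
  have hcont : Continuous Q := by
    refine (LipschitzWith.of_le_add_mul A.toNNReal fun t s => ?_).continuous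
    rw [Real.coe_toNNReal A hA, Real.dist_eq]
    rcases le_total t s with hts | hst
    · rw [abs_sub_comm, abs_of_nonneg (sub_nonneg.2 hts), mul_comm]
      linarith [(hslope t s hts).2]
    · linarith [hanti.antitone hst, mul_nonneg hA (abs_nonneg (t - s))]
  have hpos : ∀ h, Q h = 0 → 0 < h := fun h hh => by
    by_contra! hle
    linarith [hanti.antitone hle]
  set T := Q 0 / a + 1
  have hT : 0 ≤ T := by positivity
  have hQT : Q T ≤ 0 := by
    have := (hslope 0 T hT).1
    have : (T - 0) * a = Q 0 + a := by rw [sub_zero, add_mul, div_mul_cancel₀ _ ha.ne', one_mul]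
    linarith
  obtain ⟨h, -, hh⟩ := intermediate_value_Icc' hT hcont.continuousOn ⟨hQT, h0.le⟩
  exact ⟨⟨h, hh, fun y hy => hanti.injective (hy.trans hh.symm)⟩, hpos⟩

namespace CookieCutter

variable (cc : CookieCutter)

theorem b_pos : 0 < cc.b := one_pos.trans cc.hb1

theorem b_le_B : cc.b ≤ cc.B := by
  have j : Fin cc.N := ⟨0, by linarith [cc.hN]⟩
  obtain ⟨u, v, huv, hJ⟩ := cc.hJsub_interval j
  have hu : u ∈ ⋃ j, cc.Jsub j := mem_iUnion.2 ⟨j, hJ ▸ left_mem_Icc.2 huv⟩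
  exact (cc.hb.1 ⟨u, hu, rfl⟩).trans (cc.hB.1 ⟨u, hu, rfl⟩)

theorem one_lt_B : 1 < cc.B := cc.hb1.trans_le cc.b_le_B

theorem B_pos : 0 < cc.B := one_pos.trans cc.one_lt_B

theorem abs_deriv_f_mem {j : Fin cc.N} {x : ℝ} (hx : x ∈ cc.Jsub j) :
    cc.b ≤ |deriv cc.f x| ∧ |deriv cc.f x| ≤ cc.B :=
  ⟨cc.hb.1 ⟨x, mem_iUnion.2 ⟨j, hx⟩, rfl⟩, cc.hB.1 ⟨x, mem_iUnion.2 ⟨j, hx⟩, rfl⟩⟩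

theorem mapsTo_φ (j : Fin cc.N) : MapsTo (cc.φ j) (Icc 0 1) (Icc 0 1) :=
  fun _ hx => cc.hJsub_sub j (cc.hφ_maps j _ hx)

theorem abs_deriv_φ {j : Fin cc.N} {x : ℝ} (hx : x ∈ Icc (0 : ℝ) 1) :
    |deriv (cc.φ j) x| = |deriv cc.f (cc.φ j x)|⁻¹ := by
  have h := deriv_mul_deriv_eq_one hx (uniqueDiffOn_Icc one_pos x hx)
    (cc.hfdiff j _ (cc.hφ_maps j x hx)) (cc.hφdiff j x hx) (cc.hφ_rinv j)
  exact eq_inv_of_mul_eq_one_left (by rw [← abs_mul, mul_comm, h, abs_one])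

theorem abs_deriv_φ_mem {j : Fin cc.N} {x : ℝ} (hx : x ∈ Icc (0 : ℝ) 1) :
    cc.B⁻¹ ≤ |deriv (cc.φ j) x| ∧ |deriv (cc.φ j) x| ≤ cc.b⁻¹ := by
  obtain ⟨hb, hB⟩ := cc.abs_deriv_f_mem (cc.hφ_maps j x hx)
  rw [cc.abs_deriv_φ hx]
  exact ⟨inv_anti₀ (cc.b_pos.trans_le hb) hB, inv_anti₀ cc.b_pos hb⟩

/-- Since `|f'| ≥ b > 1`, the additive Hölder bound on `f'` is also a multiplicative one. -/
theorem abs_deriv_φ_le_exp_mul {j : Fin cc.N} {u v : ℝ} (hu : u ∈ Icc (0 : ℝ) 1)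
    (hv : v ∈ Icc (0 : ℝ) 1) :
    |deriv (cc.φ j) u| ≤ exp (cc.c * |cc.φ j u - cc.φ j v| ^ cc.γ) * |deriv (cc.φ j) v| := by
  have hfu := (cc.abs_deriv_f_mem (cc.hφ_maps j u hu)).1
  have hpos : 0 < |deriv cc.f (cc.φ j u)| := cc.b_pos.trans_le hfu
  have hfv : 0 < |deriv cc.f (cc.φ j v)| :=
    cc.b_pos.trans_le (cc.abs_deriv_f_mem (cc.hφ_maps j v hv)).1
  have hsub : |deriv cc.f (cc.φ j v)| - |deriv cc.f (cc.φ j u)|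
      ≤ cc.c * |cc.φ j u - cc.φ j v| ^ cc.γ * |deriv cc.f (cc.φ j u)| := by
    have hhol := cc.hHolder j _ (cc.hφ_maps j v hv) _ (cc.hφ_maps j u hu)
    rw [abs_sub_comm (cc.φ j v)] at hhol
    have : 0 ≤ cc.c * |cc.φ j u - cc.φ j v| ^ cc.γ := by have := cc.hc; positivity
    calc |deriv cc.f (cc.φ j v)| - |deriv cc.f (cc.φ j u)|
        ≤ |deriv cc.f (cc.φ j v) - deriv cc.f (cc.φ j u)| := abs_sub_abs_le_abs_sub _ _
      _ ≤ cc.c * |cc.φ j u - cc.φ j v| ^ cc.γ := hhol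
      _ ≤ cc.c * |cc.φ j u - cc.φ j v| ^ cc.γ * |deriv cc.f (cc.φ j u)| :=
          le_mul_of_one_le_right this (cc.hb1.le.trans hfu)
  rw [cc.abs_deriv_φ hu, cc.abs_deriv_φ hv, ← div_eq_mul_inv, le_div_iff₀ hfv,
    inv_mul_le_iff₀ hpos, mul_comm]
  exact le_exp_mul_of_sub_le_mul hpos.le hsub

theorem mapsTo_wordMap (σ : List (Fin cc.N)) :
    MapsTo (cc.wordMap σ) (Icc 0 1) (Icc 0 1) := by
  induction σ with
  | nil => exact mapsTo_id _
  | cons j σ ih => exact (cc.mapsTo_φ j).comp ih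

theorem differentiableAt_wordMap (σ : List (Fin cc.N)) {x : ℝ} (hx : x ∈ Icc (0 : ℝ) 1) :
    DifferentiableAt ℝ (cc.wordMap σ) x := by
  induction σ with
  | nil => exact differentiableAt_id
  | cons j σ ih => exact (cc.hφdiff j _ (cc.mapsTo_wordMap σ hx)).comp x ih

theorem deriv_wordMap_cons (j : Fin cc.N) (σ : List (Fin cc.N)) {x : ℝ}
    (hx : x ∈ Icc (0 : ℝ) 1) :
    deriv (cc.wordMap (j :: σ)) x
      = deriv (cc.φ j) (cc.wordMap σ x) * deriv (cc.wordMap σ) x :=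
  deriv_comp x (cc.hφdiff j _ (cc.mapsTo_wordMap σ hx)) (cc.differentiableAt_wordMap σ hx)

theorem wordMap_append (σ τ : List (Fin cc.N)) :
    cc.wordMap (σ ++ τ) = cc.wordMap σ ∘ cc.wordMap τ := by
  induction σ with
  | nil => rfl
  | cons j σ ih => exact congrArg (cc.φ j ∘ ·) ih

theorem deriv_wordMap_append (σ τ : List (Fin cc.N)) {x : ℝ} (hx : x ∈ Icc (0 : ℝ) 1) :
    deriv (cc.wordMap (σ ++ τ)) x
      = deriv (cc.wordMap σ) (cc.wordMap τ x) * deriv (cc.wordMap τ) x := by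
  rw [wordMap_append]
  exact deriv_comp x (cc.differentiableAt_wordMap σ (cc.mapsTo_wordMap τ hx))
    (cc.differentiableAt_wordMap τ hx)

theorem abs_deriv_wordMap_mem (σ : List (Fin cc.N)) {x : ℝ} (hx : x ∈ Icc (0 : ℝ) 1) :
    cc.B⁻¹ ^ σ.length ≤ |deriv (cc.wordMap σ) x| ∧
      |deriv (cc.wordMap σ) x| ≤ cc.b⁻¹ ^ σ.length := by
  induction σ with
  | nil => simp [wordMap]
  | cons j σ ih =>
    obtain ⟨hlo, hhi⟩ := cc.abs_deriv_φ_mem (j := j) (cc.mapsTo_wordMap σ hx)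
    rw [cc.deriv_wordMap_cons j σ hx, abs_mul, List.length_cons, pow_succ', pow_succ']
    have := cc.B_pos
    exact ⟨mul_le_mul hlo ih.1 (by positivity) (abs_nonneg _),
      mul_le_mul hhi ih.2 (abs_nonneg _) (inv_nonneg.2 cc.b_pos.le)⟩

theorem abs_wordMap_sub_le (σ : List (Fin cc.N)) {x y : ℝ} (hx : x ∈ Icc (0 : ℝ) 1)
    (hy : y ∈ Icc (0 : ℝ) 1) : |cc.wordMap σ x - cc.wordMap σ y| ≤ cc.b⁻¹ ^ σ.length := by
  have hxy : |x - y| ≤ 1 := abs_sub_le_iff.2 ⟨by linarith [hx.2, hy.1], by linarith [hx.1, hy.2]⟩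
  calc |cc.wordMap σ x - cc.wordMap σ y| ≤ cc.b⁻¹ ^ σ.length * |x - y| :=
        (convex_Icc 0 1).norm_image_sub_le_of_norm_deriv_le
          (fun _ hz => cc.differentiableAt_wordMap σ hz)
          (fun _ hz => (cc.abs_deriv_wordMap_mem σ hz).2) hy hx
    _ ≤ cc.b⁻¹ ^ σ.length := mul_le_of_le_one_right (by have := cc.b_pos; positivity) hxy

/-- The exponent `c (1 - b^{-γn}) / (b^γ - 1)` is the geometric sum `c (b^{-γ} + ⋯ + b^{-γn})`
of the one-branch distortions along the word. -/
theorem abs_deriv_wordMap_le_exp_mul (σ : List (Fin cc.N)) {x y : ℝ}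
    (hx : x ∈ Icc (0 : ℝ) 1) (hy : y ∈ Icc (0 : ℝ) 1) :
    |deriv (cc.wordMap σ) x|
      ≤ exp (cc.c / (cc.b ^ cc.γ - 1) * (1 - (cc.b ^ cc.γ)⁻¹ ^ σ.length))
        * |deriv (cc.wordMap σ) y| := by
  induction σ with
  | nil => simp [wordMap]
  | cons j σ ih =>
    have hb := cc.b_pos
    have hβ : 1 < cc.b ^ cc.γ := one_lt_rpow cc.hb1 cc.hγ.1
    have hstep : cc.c * |cc.wordMap (j :: σ) x - cc.wordMap (j :: σ) y| ^ cc.γ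
        ≤ cc.c * (cc.b ^ cc.γ)⁻¹ ^ (σ.length + 1) := by
      refine mul_le_mul_of_nonneg_left ?_ cc.hc.le
      calc |cc.wordMap (j :: σ) x - cc.wordMap (j :: σ) y| ^ cc.γ
          ≤ (cc.b⁻¹ ^ (σ.length + 1)) ^ cc.γ :=
            rpow_le_rpow (abs_nonneg _) (cc.abs_wordMap_sub_le _ hx hy) cc.hγ.1.le
        _ = (cc.b ^ cc.γ)⁻¹ ^ (σ.length + 1) := by
            rw [← rpow_natCast, ← rpow_natCast, ← rpow_mul (by positivity), mul_comm,
              rpow_mul (by positivity), inv_rpow hb.le]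
    have hexp : cc.c / (cc.b ^ cc.γ - 1) * (1 - (cc.b ^ cc.γ)⁻¹ ^ σ.length)
        + cc.c * (cc.b ^ cc.γ)⁻¹ ^ (σ.length + 1)
        = cc.c / (cc.b ^ cc.γ - 1) * (1 - (cc.b ^ cc.γ)⁻¹ ^ (σ.length + 1)) := by
      rw [pow_succ']
      generalize (cc.b ^ cc.γ)⁻¹ ^ σ.length = ρ
      field_simp [(sub_pos.2 hβ).ne']
      ring
    calc |deriv (cc.wordMap (j :: σ)) x|
        = |deriv (cc.φ j) (cc.wordMap σ x)| * |deriv (cc.wordMap σ) x| := by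
          rw [cc.deriv_wordMap_cons j σ hx, abs_mul]
      _ ≤ (exp (cc.c * (cc.b ^ cc.γ)⁻¹ ^ (σ.length + 1)) * |deriv (cc.φ j) (cc.wordMap σ y)|)
          * (exp (cc.c / (cc.b ^ cc.γ - 1) * (1 - (cc.b ^ cc.γ)⁻¹ ^ σ.length))
            * |deriv (cc.wordMap σ) y|) := by
          refine mul_le_mul ?_ ih (abs_nonneg _) (by positivity)
          refine (cc.abs_deriv_φ_le_exp_mul (cc.mapsTo_wordMap σ hx)
            (cc.mapsTo_wordMap σ hy)).trans (mul_le_mul_of_nonneg_right ?_ (abs_nonneg _))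
          exact exp_le_exp.2 hstep
      _ = _ := by
          rw [cc.deriv_wordMap_cons j σ hy, abs_mul, List.length_cons, ← hexp, exp_add]
          ring

theorem abs_deriv_wordMap_le_xi_mul (σ : List (Fin cc.N)) {x y : ℝ}
    (hx : x ∈ Icc (0 : ℝ) 1) (hy : y ∈ Icc (0 : ℝ) 1) :
    |deriv (cc.wordMap σ) x| ≤ cc.xi * |deriv (cc.wordMap σ) y| := by
  refine (cc.abs_deriv_wordMap_le_exp_mul σ hx hy).trans
    (mul_le_mul_of_nonneg_right (exp_le_exp.2 ?_) (abs_nonneg _))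
  have hβ : 0 < cc.b ^ cc.γ - 1 := sub_pos.2 (one_lt_rpow cc.hb1 cc.hγ.1)
  have hρ : 0 ≤ (cc.b ^ cc.γ)⁻¹ ^ σ.length := by have := cc.b_pos; positivity
  exact mul_le_of_le_one_right (div_pos cc.hc hβ).le (by linarith)

theorem one_le_xi : 1 ≤ cc.xi :=
  one_le_exp (div_pos cc.hc (sub_pos.2 (one_lt_rpow cc.hb1 cc.hγ.1))).le

theorem le_φnorm (σ : List (Fin cc.N)) {x : ℝ} (hx : x ∈ Icc (0 : ℝ) 1) :
    |deriv (cc.wordMap σ) x| ≤ cc.φnorm σ :=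
  le_csSup ⟨cc.b⁻¹ ^ σ.length, by
    rintro _ ⟨y, hy, rfl⟩
    exact (cc.abs_deriv_wordMap_mem σ hy).2⟩ ⟨x, hx, rfl⟩

theorem φnorm_le {σ : List (Fin cc.N)} {M : ℝ}
    (h : ∀ x ∈ Icc (0 : ℝ) 1, |deriv (cc.wordMap σ) x| ≤ M) : cc.φnorm σ ≤ M :=
  csSup_le ((nonempty_Icc.2 zero_le_one).image _) (by rintro _ ⟨x, hx, rfl⟩; exact h x hx)

theorem φnorm_mem (σ : List (Fin cc.N)) :
    cc.B⁻¹ ^ σ.length ≤ cc.φnorm σ ∧ cc.φnorm σ ≤ cc.b⁻¹ ^ σ.length :=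
  ⟨(cc.abs_deriv_wordMap_mem σ (left_mem_Icc.2 zero_le_one)).1.trans
      (cc.le_φnorm σ (left_mem_Icc.2 zero_le_one)),
    cc.φnorm_le fun _ hx => (cc.abs_deriv_wordMap_mem σ hx).2⟩

theorem φnorm_pos (σ : List (Fin cc.N)) : 0 < cc.φnorm σ :=
  (pow_pos (inv_pos.2 cc.B_pos) _).trans_le (cc.φnorm_mem σ).1

theorem log_φnorm_mem (σ : List (Fin cc.N)) :
    -(σ.length * log cc.B) ≤ log (cc.φnorm σ) ∧ log (cc.φnorm σ) ≤ -(σ.length * log cc.b) := by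
  have hB := inv_pos.2 cc.B_pos
  obtain ⟨hlo, hhi⟩ := cc.φnorm_mem σ
  have hlo' := log_le_log (pow_pos hB _) hlo
  have hhi' := log_le_log (cc.φnorm_pos σ) hhi
  rw [log_pow, log_inv] at hlo' hhi'
  constructor <;> linarith

theorem φnorm_append_le (σ τ : List (Fin cc.N)) :
    cc.φnorm (σ ++ τ) ≤ cc.φnorm σ * cc.φnorm τ :=
  cc.φnorm_le fun x hx => by
    rw [cc.deriv_wordMap_append σ τ hx, abs_mul]
    exact mul_le_mul (cc.le_φnorm σ (cc.mapsTo_wordMap τ hx)) (cc.le_φnorm τ hx)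
      (abs_nonneg _) (cc.φnorm_pos σ).le

theorem φnorm_mul_φnorm_le (σ τ : List (Fin cc.N)) :
    cc.φnorm σ * cc.φnorm τ ≤ cc.xi * cc.φnorm (σ ++ τ) := by
  have hσ := cc.φnorm_pos σ
  rw [mul_comm, ← le_div_iff₀ hσ]
  refine cc.φnorm_le fun x hx => ?_
  rw [le_div_iff₀ hσ]
  have hdist : cc.φnorm σ ≤ cc.xi * |deriv (cc.wordMap σ) (cc.wordMap τ x)| :=
    cc.φnorm_le fun y hy => cc.abs_deriv_wordMap_le_xi_mul σ hy (cc.mapsTo_wordMap τ hx)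
  calc |deriv (cc.wordMap τ) x| * cc.φnorm σ
      ≤ |deriv (cc.wordMap τ) x| * (cc.xi * |deriv (cc.wordMap σ) (cc.wordMap τ x)|) :=
        mul_le_mul_of_nonneg_left hdist (abs_nonneg _)
    _ = cc.xi * |deriv (cc.wordMap (σ ++ τ)) x| := by
        rw [cc.deriv_wordMap_append σ τ hx, abs_mul]; ring
    _ ≤ cc.xi * cc.φnorm (σ ++ τ) :=
        mul_le_mul_of_nonneg_left (cc.le_φnorm _ hx) (zero_le_one.trans cc.one_le_xi)

def partitionSum (k : ℕ) (t : ℝ) : ℝ := ∑ σ : Fin k → Fin cc.N, cc.φnorm (List.ofFn σ) ^ t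

theorem partitionSum_pos (k : ℕ) (t : ℝ) : 0 < cc.partitionSum k t := by
  have : Nonempty (Fin cc.N) := ⟨⟨0, by linarith [cc.hN]⟩⟩
  exact Finset.sum_pos (fun σ _ => rpow_pos_of_pos (cc.φnorm_pos _) t) Finset.univ_nonempty

theorem partitionSum_add_le (m n : ℕ) (t : ℝ) :
    cc.partitionSum (m + n) t ≤ cc.xi ^ |t| * (cc.partitionSum m t * cc.partitionSum n t) := by
  have hsplit : cc.partitionSum (m + n) t = ∑ p : (Fin m → Fin cc.N) × (Fin n → Fin cc.N),
      cc.φnorm (List.ofFn p.1 ++ List.ofFn p.2) ^ t :=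
    (Fintype.sum_equiv (Fin.appendEquiv m n) _ _
      fun p => by rw [← List.ofFn_fin_append]; rfl).symm
  rw [hsplit, partitionSum, partitionSum, Finset.sum_mul_sum, ← Fintype.sum_prod_type',
    Finset.mul_sum]
  refine Finset.sum_le_sum fun p _ => ?_
  rw [← mul_rpow (cc.φnorm_pos _).le (cc.φnorm_pos _).le]
  exact rpow_le_pow_abs_mul_rpow (cc.φnorm_pos _) (cc.φnorm_append_le _ _)
    (cc.φnorm_mul_φnorm_le _ _) t

theorem log_partitionSum_add_le (m n : ℕ) (t : ℝ) :
    log (cc.partitionSum (m + n) t)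
      ≤ log (cc.partitionSum m t) + log (cc.partitionSum n t) + |t| * log cc.xi := by
  have hξ : 0 < cc.xi := exp_pos _
  have h := log_le_log (cc.partitionSum_pos _ t) (cc.partitionSum_add_le m n t)
  rw [log_mul (rpow_pos_of_pos hξ _).ne'
      (mul_pos (cc.partitionSum_pos m t) (cc.partitionSum_pos n t)).ne',
    log_mul (cc.partitionSum_pos m t).ne' (cc.partitionSum_pos n t).ne',
    log_rpow hξ] at h
  linarith

theorem log_partitionSum_zero (k : ℕ) : log (cc.partitionSum k 0) = k * log cc.N := by
  simp [partitionSum, log_pow]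

/-- Raising the exponent from `t` to `s` multiplies each `‖φ'_σ‖^t`, `σ ∈ Ω_k`, by a factor
between `B^{-k(s-t)}` and `b^{-k(s-t)}`. -/
theorem log_partitionSum_sub_mem {t s : ℝ} (hts : t ≤ s) (k : ℕ) :
    k * (s - t) * log cc.b ≤ log (cc.partitionSum k t) - log (cc.partitionSum k s) ∧
      log (cc.partitionSum k t) - log (cc.partitionSum k s) ≤ k * (s - t) * log cc.B := by
  have hterm : ∀ σ : Fin k → Fin cc.N,
      exp (-(k * (s - t) * log cc.B)) * cc.φnorm (List.ofFn σ) ^ t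
          ≤ cc.φnorm (List.ofFn σ) ^ s ∧
        cc.φnorm (List.ofFn σ) ^ s
          ≤ exp (-(k * (s - t) * log cc.b)) * cc.φnorm (List.ofFn σ) ^ t := by
    intro σ
    have hlog := cc.log_φnorm_mem (List.ofFn σ)
    rw [List.length_ofFn] at hlog
    rw [rpow_def_of_pos (cc.φnorm_pos _), rpow_def_of_pos (cc.φnorm_pos _), ← exp_add,
      ← exp_add, exp_le_exp, exp_le_exp]
    have hst : 0 ≤ s - t := sub_nonneg.2 hts
    constructor <;> nlinarith [mul_le_mul_of_nonneg_right hlog.1 hst,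
      mul_le_mul_of_nonneg_right hlog.2 hst]
  have hlo : exp (-(k * (s - t) * log cc.B)) * cc.partitionSum k t ≤ cc.partitionSum k s := by
    unfold partitionSum
    rw [Finset.mul_sum]
    exact Finset.sum_le_sum fun σ _ => (hterm σ).1
  have hhi : cc.partitionSum k s ≤ exp (-(k * (s - t) * log cc.b)) * cc.partitionSum k t := by
    unfold partitionSum
    rw [Finset.mul_sum]
    exact Finset.sum_le_sum fun σ _ => (hterm σ).2
  have hlo' := log_le_log (mul_pos (exp_pos _) (cc.partitionSum_pos k t)) hlo
  have hhi' := log_le_log (cc.partitionSum_pos k s) hhi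
  rw [log_mul (exp_pos _).ne' (cc.partitionSum_pos k t).ne', log_exp] at hlo' hhi'
  constructor <;> linarith

theorem mul_le_log_partitionSum (k : ℕ) (t : ℝ) :
    k * (log cc.N - |t| * log cc.B) ≤ log (cc.partitionSum k t) := by
  have hb := log_pos cc.hb1
  have hB := log_pos cc.one_lt_B
  have hk : (0 : ℝ) ≤ k := k.cast_nonneg
  rcases le_total 0 t with ht | ht
  · have := (cc.log_partitionSum_sub_mem ht k).2
    rw [cc.log_partitionSum_zero, abs_of_nonneg ht] at *
    linarith
  · have := (cc.log_partitionSum_sub_mem ht k).1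
    rw [cc.log_partitionSum_zero, abs_of_nonpos ht] at *
    nlinarith [mul_nonneg hk (mul_nonneg (neg_nonneg.2 ht) hb.le),
      mul_nonneg hk (mul_nonneg (neg_nonneg.2 ht) hB.le)]

def pressure (t : ℝ) : ℝ := limUnder atTop fun k : ℕ => log (cc.partitionSum k t) / k

theorem tendsto_pressure (t : ℝ) :
    Tendsto (fun k : ℕ => log (cc.partitionSum k t) / k) atTop (𝓝 (cc.pressure t)) :=
  tendsto_nhds_limUnder (exists_tendsto_div_of_le_add_add (cc.log_partitionSum_add_le · · t)
    (cc.mul_le_log_partitionSum · t))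

theorem pressure_zero : cc.pressure 0 = log cc.N := by
  refine tendsto_nhds_unique (cc.tendsto_pressure 0) (tendsto_const_nhds.congr' ?_)
  filter_upwards [eventually_ne_atTop 0] with k hk
  rw [cc.log_partitionSum_zero, mul_div_cancel_left₀ _ (Nat.cast_ne_zero.2 hk)]

theorem pressure_sub_mem {t s : ℝ} (hts : t ≤ s) :
    (s - t) * log cc.b ≤ cc.pressure t - cc.pressure s ∧
      cc.pressure t - cc.pressure s ≤ (s - t) * log cc.B := by
  have hlim := (cc.tendsto_pressure t).sub (cc.tendsto_pressure s)
  have hk : ∀ᶠ k : ℕ in atTop, (0 : ℝ) < k :=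
    (eventually_ne_atTop 0).mono fun k hk => Nat.cast_pos.2 (Nat.pos_of_ne_zero hk)
  constructor
  · refine ge_of_tendsto hlim (hk.mono fun k hk => ?_)
    rw [← sub_div, le_div_iff₀ hk]
    linarith [(cc.log_partitionSum_sub_mem hts k).1]
  · refine le_of_tendsto hlim (hk.mono fun k hk => ?_)
    rw [← sub_div, div_le_iff₀ hk]
    linarith [(cc.log_partitionSum_sub_mem hts k).2]

end CookieCutter

theorem pressure_exists_unique_zero (cc : CookieCutter) :
    ∃ Q : ℝ → ℝ,
      (∀ t : ℝ, Filter.Tendsto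
        (fun k : ℕ => (1 / (k : ℝ)) * Real.log
          (∑ σ : Fin k → Fin cc.N, cc.φnorm (List.ofFn σ) ^ t))
        Filter.atTop (nhds (Q t))) ∧
      (∃! h : ℝ, Q h = 0) ∧
      (∀ h : ℝ, Q h = 0 → 0 < h) := by
  refine ⟨cc.pressure, fun t => ?_, existsUnique_zero_pos_of_slope_bounds (log_pos cc.hb1)
    (fun t s hts => cc.pressure_sub_mem hts) ?_⟩
  · simpa only [one_div_mul_eq_div, CookieCutter.partitionSum] using cc.tendsto_pressure t
  · rw [cc.pressure_zero]
    exact log_pos (by exact_mod_cast cc.hN.trans_lt' one_lt_two)
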